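/- For every real number h, the double integral of the 2×2 determinant evaluates as ∫_{−∞}^{h} ∫_{−x−h}^{∞} [φ(x)φ(−x−x₂) − φ(−x₂−h)φ(h)] dx₂ dx = Φ(h)² − φ(h)[hΦ(h) + φ(h)]. -/

import Mathlib

open MeasureTheory Real

open Set Filter Topology

/-- The standard normal density. -/
noncomputable def phi (x : ℝ) : ℝ := (Real.sqrt (2 * Real.pi))⁻¹ * Real.exp (-x ^ 2 / 2)

/-- The standard normal cumulative distribution function. -/
noncomputable def Phi (t : ℝ) : ℝ := ∫ x in Set.Iic t, phi x

lemma phi_nonneg (x : ℝ) : 0 ≤ phi x := by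
  unfold phi; positivity

lemma phi_neg_arg (x : ℝ) : phi (-x) = phi x := by simp [phi]

lemma continuous_phi : Continuous phi := by
  unfold phi; fun_prop

lemma phi_alt : phi = fun x => (Real.sqrt (2 * Real.pi))⁻¹ * Real.exp (-(1/2) * x ^ 2) := by
  funext x; unfold phi; ring_nf

lemma integrable_phi : Integrable phi := by
  rw [phi_alt]
  exact (integrable_exp_neg_mul_sq (by norm_num : (0:ℝ) < 1/2)).const_mul _

lemma integrable_id_mul_phi : Integrable (fun x : ℝ => x * phi x) := by
  have h := (integrable_mul_exp_neg_mul_sq (by norm_num : (0:ℝ) < 1/2)).const_mul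
      ((Real.sqrt (2 * Real.pi))⁻¹)
  refine h.congr (Eventually.of_forall fun x => ?_)
  rw [phi_alt]; ring

lemma integrable_neg_id_mul_phi : Integrable (fun x : ℝ => -x * phi x) := by
  refine integrable_id_mul_phi.neg.congr (Filter.Eventually.of_forall fun x => ?_)
  simp [neg_mul]

lemma hasDerivAt_phi (x : ℝ) : HasDerivAt phi (-x * phi x) x := by
  have h1 : HasDerivAt (fun y : ℝ => -y ^ 2 / 2) (-x) x := by
    have := ((hasDerivAt_pow 2 x).neg.div_const 2)
    exact this.congr_deriv (by norm_num; ring)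
  have h2 := (h1.exp).const_mul ((Real.sqrt (2 * Real.pi))⁻¹)
  show HasDerivAt (fun y => (Real.sqrt (2 * Real.pi))⁻¹ * Real.exp (-y ^ 2 / 2)) (-x * phi x) x
  exact h2.congr_deriv (by unfold phi; ring)

lemma Phi_eq (t : ℝ) : Phi t = Phi 0 + ∫ x in (0:ℝ)..t, phi x := by
  have h := intervalIntegral.integral_Iic_sub_Iic (μ := volume) (f := phi) (a := 0) (b := t)
    integrable_phi.integrableOn integrable_phi.integrableOn
  unfold Phi
  linarith [h]

lemma hasDerivAt_Phi (x : ℝ) : HasDerivAt Phi (phi x) x := by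
  have h := intervalIntegral.integral_hasDerivAt_right
      (integrable_phi.intervalIntegrable (a := 0) (b := x))
      (continuous_phi.stronglyMeasurableAtFilter _ _) continuous_phi.continuousAt
  have e : Phi = fun u => Phi 0 + ∫ y in (0:ℝ)..u, phi y := funext Phi_eq
  rw [e]
  exact h.const_add _

lemma continuous_Phi : Continuous Phi :=
  continuous_iff_continuousAt.2 fun x => (hasDerivAt_Phi x).continuousAt

lemma Phi_nonneg (t : ℝ) : 0 ≤ Phi t :=
  setIntegral_nonneg measurableSet_Iic fun x _ => phi_nonneg x

lemma tendsto_phi_atBot : Tendsto phi atBot (𝓝 0) := by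
  have hsq : Tendsto (fun x : ℝ => x ^ 2) atBot atTop := by
    simpa [pow_two] using (tendsto_id (α := ℝ) (x := atBot)).atBot_mul_atBot₀ tendsto_id
  have h1 : Tendsto (fun x : ℝ => -x ^ 2 / 2) atBot atBot := by
    apply Tendsto.atBot_div_const (by norm_num : (0:ℝ) < 2)
    exact tendsto_neg_atTop_atBot.comp hsq
  have h2 : Tendsto (fun x : ℝ => Real.exp (-x ^ 2 / 2)) atBot (𝓝 0) :=
    Real.tendsto_exp_atBot.comp h1
  have h3 := h2.const_mul ((Real.sqrt (2 * Real.pi))⁻¹)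
  rw [mul_zero] at h3
  exact h3.congr fun k => by unfold phi; ring

lemma integral_Iic_neg_mul_phi (x : ℝ) : ∫ t in Iic x, -t * phi t = phi x := by
  have h := integral_Iic_of_hasDerivAt_of_tendsto' (a := x) (f := phi) (f' := fun t => -t * phi t)
    (fun t _ => hasDerivAt_phi t) integrable_neg_id_mul_phi.integrableOn tendsto_phi_atBot
  simpa using h

lemma neg_mul_Phi_le (x : ℝ) : -x * Phi x ≤ phi x := by
  rw [← integral_Iic_neg_mul_phi x]
  unfold Phi
  rw [← integral_const_mul]
  apply setIntegral_mono_on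
  · exact (integrable_phi.integrableOn).const_mul _
  · exact integrable_neg_id_mul_phi.integrableOn
  · exact measurableSet_Iic
  · intro t ht
    exact mul_le_mul_of_nonneg_right (by simpa using ht) (phi_nonneg t)

lemma tendsto_Phi_atBot : Tendsto Phi atBot (𝓝 0) := by
  apply tendsto_of_tendsto_of_tendsto_of_le_of_le' tendsto_const_nhds tendsto_phi_atBot
  · exact Eventually.of_forall fun x => Phi_nonneg x
  · filter_upwards [eventually_le_atBot (-1 : ℝ)] with x hx
    nlinarith [neg_mul_Phi_le x, Phi_nonneg x]

lemma tendsto_mul_Phi_atBot : Tendsto (fun x : ℝ => x * Phi x) atBot (𝓝 0) := by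
  have hlo : Tendsto (fun x : ℝ => -phi x) atBot (𝓝 0) := by
    simpa using tendsto_phi_atBot.neg
  apply tendsto_of_tendsto_of_tendsto_of_le_of_le' hlo tendsto_const_nhds
  · filter_upwards [eventually_le_atBot (0 : ℝ)] with x hx
    nlinarith [neg_mul_Phi_le x]
  · filter_upwards [eventually_le_atBot (0 : ℝ)] with x hx
    exact mul_nonpos_of_nonpos_of_nonneg hx (Phi_nonneg x)

lemma integrableOn_Phi_Iic (h : ℝ) : IntegrableOn Phi (Iic h) := by
  have h1 : IntegrableOn Phi (Iic (-1)) := by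
    apply Integrable.mono' integrable_phi.integrableOn
      continuous_Phi.aestronglyMeasurable.restrict
    filter_upwards [ae_restrict_mem measurableSet_Iic] with x hx
    rw [Real.norm_eq_abs, abs_of_nonneg (Phi_nonneg x)]
    have hx' : x ≤ -1 := hx
    nlinarith [neg_mul_Phi_le x, Phi_nonneg x]
  have h2 : IntegrableOn Phi (Icc (-1) h) := continuous_Phi.integrableOn_Icc
  apply (h1.union h2).mono_set
  intro x hx
  rcases le_or_gt x (-1) with h' | h'
  · exact Or.inl h'
  · exact Or.inr ⟨h'.le, hx⟩

lemma integral_Phi_Iic (h : ℝ) : ∫ x in Iic h, Phi x = h * Phi h + phi h := by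
  have hder : ∀ x ∈ Iic h, HasDerivAt (fun y => y * Phi y + phi y) (Phi x) x := by
    intro x _
    have h1 := ((hasDerivAt_id x).mul (hasDerivAt_Phi x)).add (hasDerivAt_phi x)
    exact h1.congr_deriv (by simp only [id_eq, one_mul]; ring)
  have htend : Tendsto (fun y : ℝ => y * Phi y + phi y) atBot (𝓝 0) := by
    simpa using tendsto_mul_Phi_atBot.add tendsto_phi_atBot
  have := integral_Iic_of_hasDerivAt_of_tendsto' hder (integrableOn_Phi_Iic h) htend
  simpa using this

lemma setIntegral_Iic_comp_sub (f : ℝ → ℝ) (a b : ℝ) :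
    ∫ x in Iic b, f (x - a) = ∫ x in Iic (b - a), f x := by
  have A : MeasurableEmbedding (fun x : ℝ => x - a) :=
    (Homeomorph.subRight a).isClosedEmbedding.measurableEmbedding
  have hmap : Measure.map (fun x : ℝ => x - a) volume = volume := by
    have : (fun x : ℝ => x - a) = fun x : ℝ => x + (-a) := by funext x; ring
    rw [this]
    exact Measure.IsAddRightInvariant.map_add_right_eq_self (μ := volume) (-a)
  have h := A.setIntegral_map (μ := volume) f (Iic (b - a))
  rw [hmap] at h
  have hpre : (fun x : ℝ => x - a) ⁻¹' Iic (b - a) = Iic b := by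
    ext x; simp [sub_le_sub_iff_right]
  rw [hpre] at h
  exact h.symm

lemma inner_one (x h : ℝ) : (∫ x₂ in Ioi (-x - h), phi (-x - x₂)) = Phi h := by
  have e1 : (∫ x₂ in Ioi (-x - h), phi (-x - x₂))
      = ∫ x₂ in Ioi (-x - h), (fun u => phi (u - x)) (-x₂) := by
    refine setIntegral_congr_fun measurableSet_Ioi fun x₂ _ => ?_
    show phi (-x - x₂) = phi (-x₂ - x)
    congr 1; ring
  rw [e1, integral_comp_neg_Ioi (-x - h) (fun u => phi (u - x)),
    setIntegral_Iic_comp_sub phi x (-(-x - h))]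
  have : -(-x - h) - x = h := by ring
  rw [this]
  rfl

lemma inner_two (x h : ℝ) : (∫ x₂ in Ioi (-x - h), phi (-x₂ - h)) = Phi x := by
  have e1 : (∫ x₂ in Ioi (-x - h), phi (-x₂ - h))
      = ∫ x₂ in Ioi (-x - h), (fun u => phi (u - h)) (-x₂) := by
    refine setIntegral_congr_fun measurableSet_Ioi fun x₂ _ => rfl
  rw [e1, integral_comp_neg_Ioi (-x - h) (fun u => phi (u - h)),
    setIntegral_Iic_comp_sub phi h (-(-x - h))]
  have : -(-x - h) - h = x := by ring
  rw [this]
  rfl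

lemma integrable_phi_comp_one (x : ℝ) : Integrable (fun x₂ : ℝ => phi (-x - x₂)) := by
  refine (integrable_phi.comp_add_right x).congr (Eventually.of_forall fun x₂ => ?_)
  show phi (x₂ + x) = phi (-x - x₂)
  rw [show -x - x₂ = -(x₂ + x) by ring, phi_neg_arg]

lemma integrable_phi_comp_two (h : ℝ) : Integrable (fun x₂ : ℝ => phi (-x₂ - h)) := by
  refine (integrable_phi.comp_add_right h).congr (Eventually.of_forall fun x₂ => ?_)
  show phi (x₂ + h) = phi (-x₂ - h)
  rw [show -x₂ - h = -(x₂ + h) by ring, phi_neg_arg]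

lemma inner_eq (h x : ℝ) :
    (∫ x₂ in Ioi (-x - h), (phi x * phi (-x - x₂) - phi (-x₂ - h) * phi h))
      = phi x * Phi h - Phi x * phi h := by
  rw [integral_sub (((integrable_phi_comp_one x).const_mul (phi x)).integrableOn)
      (((integrable_phi_comp_two h).mul_const (phi h)).integrableOn),
    integral_const_mul, integral_mul_const, inner_one, inner_two]

/-- For every real `h`:
`∫_{−∞}^{h} ∫_{−x−h}^{∞} [φ(x)φ(−x−x₂) − φ(−x₂−h)φ(h)] dx₂ dx = Φ(h)² − φ(h)[hΦ(h) + φ(h)]`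
(Shepp's determinant formula for the first-passage probability `F(1,h)`). -/
theorem double_integral_shepp_F1 (h : ℝ) :
    (∫ x in Set.Iic h, ∫ x₂ in Set.Ioi (-x - h),
        (phi x * phi (-x - x₂) - phi (-x₂ - h) * phi h)) =
      Phi h ^ 2 - phi h * (h * Phi h + phi h) := by
  rw [setIntegral_congr_fun measurableSet_Iic (fun x _ => inner_eq h x)]
  rw [integral_sub ((integrable_phi.mul_const (Phi h)).integrableOn)
      ((integrableOn_Phi_Iic h).mul_const (phi h)),
    integral_mul_const, integral_mul_const, integral_Phi_Iic]
  rw [show (∫ x in Iic h, phi x) = Phi h from rfl]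
  ring
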